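/- arXiv:1307.0613 — 3 statements merged into one kernel-verified Lean document; each statement's English description precedes it below -/
import Mathlib

section
/- Let ω be a group word, and let G be an ω-maximal finite p-group such that ω is interchangeable in G. Then ω(G) ≤ Z(G). -/
/-!
Suppose `ω(G)` is not central, so `K = [ω(G), G] ≠ 1`. As `G` is nilpotent, `[K, G] < K`, and a
nontrivial character of the `p`-group `K / [K, G]` has a power `χ : K → ℂˣ` of order exactly
`p`, trivial on `[K, G] K^p`. Being `G`-invariant, `χ` makes `(g, u) ↦ χ [g, u]`
bimultiplicative on `G × ω(G)`; its left radical `C` is a proper normal subgroup.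
Interchangeability puts `[ω(C), G]` in `ker χ`, so `ω(C)` lies in the right radical, and by
linear independence of characters `|G : C| ≤ |ω(G) : ω(C)|`. Multiplying by `|G : ω(G)|` gives
`|G : ω(G)| ≤ |C : ω(C)|`, contradicting `ω`-maximality.
-/

/-- The subgroup generated by `n`-th powers of elements of `H`. -/
def powSubgroup {G : Type*} [Group G] (H : Subgroup G) (n : ℕ) : Subgroup G :=
  Subgroup.closure {x | ∃ h ∈ H, h ^ n = x}

/-- The verbal subgroup `ω(H)` of a subgroup `H ≤ G` for the word `w` in `n` variables:
the subgroup generated by all values of `w` on tuples of elements of `H`. -/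
def verbal {G : Type*} [Group G] {n : ℕ} (w : FreeGroup (Fin n)) (H : Subgroup G) :
    Subgroup G :=
  Subgroup.closure {x | ∃ f : Fin n → G, (∀ i, f i ∈ H) ∧ FreeGroup.lift f w = x}

/-- `G` is `ω`-maximal: every proper subgroup `H < G` satisfies `|H : ω(H)| < |G : ω(G)|`. -/
def IsOmegaMaximal {G : Type*} [Group G] {n : ℕ} (w : FreeGroup (Fin n)) : Prop :=
  ∀ H : Subgroup G, H < ⊤ → (verbal w H).relIndex H < (verbal w (⊤ : Subgroup G)).index

/-- `ω` is interchangeable in `G`: for every normal `N ⊴ G`,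
`[ω(N),G] ≤ [N,ω(G)] ⬝ [ω(G),G]^p ⬝ [ω(G),G,G]`. -/
def IsInterchangeable {G : Type*} [Group G] {n : ℕ} (w : FreeGroup (Fin n)) (p : ℕ) : Prop :=
  ∀ N : Subgroup G, N.Normal →
    ⁅verbal w N, (⊤ : Subgroup G)⁆ ≤
      ⁅N, verbal w (⊤ : Subgroup G)⁆ ⊔ powSubgroup ⁅verbal w (⊤ : Subgroup G), (⊤ : Subgroup G)⁆ p ⊔
        ⁅⁅verbal w (⊤ : Subgroup G), (⊤ : Subgroup G)⁆, (⊤ : Subgroup G)⁆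

open scoped commutatorElement

section Verbal

variable {G : Type*} [Group G] {n : ℕ} (w : FreeGroup (Fin n))

theorem verbal_le (H : Subgroup G) : verbal w H ≤ H := by
  rw [verbal, Subgroup.closure_le]
  rintro _ ⟨v, hv, rfl⟩
  exact FreeGroup.range_lift_le (by rintro _ ⟨i, rfl⟩; exact hv i) ⟨w, rfl⟩

theorem verbal_mono {H K : Subgroup G} (h : H ≤ K) : verbal w H ≤ verbal w K :=
  Subgroup.closure_mono fun _ ⟨v, hv, hx⟩ => ⟨v, fun i => h (hv i), hx⟩

theorem map_verbal_le {G' : Type*} [Group G'] (f : G →* G') (H : Subgroup G) :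
    (verbal w H).map f ≤ verbal w (H.map f) := by
  rw [verbal, MonoidHom.map_closure]
  refine Subgroup.closure_mono ?_
  rintro _ ⟨_, ⟨v, hv, rfl⟩, rfl⟩
  exact ⟨f ∘ v, fun i => Subgroup.mem_map_of_mem f (hv i),
    (FreeGroup.lift_unique (f.comp (FreeGroup.lift v)) (by simp)).symm⟩

instance verbal_top_characteristic : (verbal w (⊤ : Subgroup G)).Characteristic :=
  Subgroup.characteristic_iff_map_le.2 fun _ => (map_verbal_le w _ ⊤).trans (verbal_mono w le_top)

end Verbal

theorem Subgroup.eq_bot_of_le_commutator_top {G : Type*} [Group G] [Group.IsNilpotent G]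
    {K : Subgroup G} (h : K ≤ ⁅K, ⊤⁆) : K = ⊥ := by
  obtain ⟨n, hn⟩ := nilpotent_iff_lowerCentralSeries.mp ‹_›
  have hle : ∀ m, K ≤ (⊤ : Subgroup G).lowerCentralSeries m := by
    intro m
    induction m with
    | zero => exact le_top
    | succ m ih => exact h.trans (Subgroup.commutator_mono ih le_top)
  exact le_bot_iff.mp (hn ▸ hle n)

section Characters

variable {Q : Type*} [Group Q]

theorem exists_monoidHom_apply_ne_one_of_commutator_le [Finite Q] (M : Type*) [CommMonoid M]
    [HasEnoughRootsOfUnity M (Monoid.exponent Q)] {N : Subgroup Q} (hN : commutator Q ≤ N)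
    {x : Q} (hx : x ∉ N) : ∃ χ : Q →* Mˣ, N ≤ χ.ker ∧ χ x ≠ 1 := by
  have : HasEnoughRootsOfUnity M (Monoid.exponent (Abelianization Q)) :=
    .of_dvd M (MonoidHom.exponent_dvd (f := Abelianization.of) QuotientGroup.mk_surjective)
  have hxN : Abelianization.of x ∉ N.map Abelianization.of := by
    rintro ⟨y, hy, hyx⟩
    have hxy : y⁻¹ * x ∈ N := hN <| by
      rw [← Abelianization.ker_of, MonoidHom.mem_ker, map_mul, map_inv, hyx, inv_mul_cancel]
    exact hx (by simpa using mul_mem hy hxy)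
  obtain ⟨φ, hφN, hφx⟩ : ∃ φ : Abelianization Q →* Mˣ,
      (∀ y ∈ N.map Abelianization.of, φ y = 1) ∧ φ (Abelianization.of x) ≠ 1 := by
    simpa using (CommGroup.forall_monoidHom_apply_eq_one_iff M _ _).not.2 hxN
  exact ⟨φ.comp Abelianization.of, fun y hy => hφN _ ⟨y, hy, rfl⟩, hφx⟩

theorem exists_pow_pow_ne_one_and_pow_eq_one {X : Type*} [Monoid X] {x : X} {p m : ℕ}
    (hx : x ≠ 1) (hxm : x ^ p ^ m = 1) : ∃ k, x ^ p ^ k ≠ 1 ∧ (x ^ p ^ k) ^ p = 1 := by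
  classical
  have hex : ∃ k, x ^ p ^ k = 1 := ⟨m, hxm⟩
  obtain ⟨k, hk⟩ : ∃ k, Nat.find hex = k + 1 :=
    Nat.exists_eq_succ_of_ne_zero fun h => hx (by simpa [h] using Nat.find_spec hex)
  refine ⟨k, Nat.find_min hex (by omega), ?_⟩
  rw [← pow_mul, ← pow_succ, ← hk]
  exact Nat.find_spec hex

theorem IsPGroup.exists_monoidHom_ne_one_pow_eq_one [Finite Q] {p : ℕ} (hQ : IsPGroup p Q)
    (M : Type*) [CommMonoid M] [HasEnoughRootsOfUnity M (Monoid.exponent Q)]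
    {N : Subgroup Q} (hN : commutator Q ≤ N) (hNtop : N ≠ ⊤) :
    ∃ χ : Q →* Mˣ, N ≤ χ.ker ∧ χ ^ p = 1 ∧ χ ≠ 1 := by
  obtain ⟨x, -, hx⟩ := SetLike.exists_of_lt (lt_top_iff_ne_top.2 hNtop)
  obtain ⟨χ, hχN, hχx⟩ := exists_monoidHom_apply_ne_one_of_commutator_le M hN hx
  obtain ⟨m, hm⟩ := hQ.exists_card_dvd_pow
  have hχm : χ ^ p ^ m = 1 := MonoidHom.ext fun q => by
    rw [MonoidHom.pow_apply, ← map_pow, orderOf_dvd_iff_pow_eq_one.1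
      ((orderOf_dvd_natCard q).trans hm), map_one, MonoidHom.one_apply]
  obtain ⟨k, hk, hkp⟩ :=
    exists_pow_pow_ne_one_and_pow_eq_one (fun h => hχx (by rw [h, MonoidHom.one_apply])) hχm
  refine ⟨χ ^ p ^ k, fun y hy => ?_, hkp, hk⟩
  rw [MonoidHom.mem_ker, MonoidHom.pow_apply, hχN hy, one_pow]

theorem natCard_le_index_of_forall_apply_eq_one {L : Type*} [Field L] (N : Subgroup Q)
    [N.FiniteIndex] (S : Set (Q →* Lˣ)) (hS : ∀ χ ∈ S, ∀ y ∈ N, χ y = 1) :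
    Nat.card S ≤ N.index := by
  let descend : S → (Q ⧸ N → L) := fun χ q => (χ.1 q.out : L)
  have hdescend : ∀ (χ : S) (y : Q), descend χ (y : Q ⧸ N) = χ.1 y := by
    intro χ y
    obtain ⟨z, hz⟩ := QuotientGroup.mk_out_eq_mul N y
    simp [descend, hz, hS χ χ.2 z z.2]
  have hli : LinearIndependent L descend := by
    refine LinearIndependent.of_comp (LinearMap.funLeft L L QuotientGroup.mk) ?_
    have hinj : Function.Injective fun χ : S => (Units.coeHom L).comp χ.1 := fun χ ψ h =>
      Subtype.ext <| MonoidHom.ext fun y => Units.ext (DFunLike.congr_fun h y)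
    have heq : ⇑(LinearMap.funLeft L L QuotientGroup.mk) ∘ descend =
        (fun f : Q →* L => ⇑f) ∘ fun χ : S => (Units.coeHom L).comp χ.1 :=
      funext fun χ => funext (hdescend χ)
    exact heq ▸ (linearIndependent_monoidHom Q L).comp _ hinj
  have := hli.finite
  have := Fintype.ofFinite S
  have := Fintype.ofFinite (Q ⧸ N)
  rw [Nat.card_eq_fintype_card, Subgroup.index, Nat.card_eq_fintype_card]
  exact hli.fintype_card_le_finrank.trans_eq (Module.finrank_fintype_fun_eq_card L)

end Characters

theorem IsPGroup.exists_character_of_not_le_center {G : Type*} [Group G] [Finite G] {p : ℕ}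
    [Fact p.Prime] (hG : IsPGroup p G) {W : Subgroup G} [W.Normal]
    (hW : ¬ W ≤ Subgroup.center G) :
    ∃ χ : ↥⁅W, (⊤ : Subgroup G)⁆ →* ℂˣ,
      ⁅⁅W, (⊤ : Subgroup G)⁆, ⊤⁆ ≤ χ.ker.map ⁅W, (⊤ : Subgroup G)⁆.subtype ∧
        χ ^ p = 1 ∧ χ ≠ 1 := by
  set K := ⁅W, (⊤ : Subgroup G)⁆
  have hK : ¬ K ≤ ⁅K, ⊤⁆ := fun h => hW <| by
    rw [← Subgroup.centralizer_univ, ← Subgroup.coe_top,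
      ← Subgroup.commutator_eq_bot_iff_le_centralizer]
    have := hG.isNilpotent
    exact Subgroup.eq_bot_of_le_commutator_top h
  have hKK : commutator K ≤ ⁅K, (⊤ : Subgroup G)⁆.subgroupOf K := by
    rw [commutator, Subgroup.commutator_le]
    exact fun x _ y _ => Subgroup.commutator_mem_commutator x.2 (Subgroup.mem_top _)
  have : NeZero (Monoid.exponent K) := ⟨Monoid.exponent_ne_zero_of_finite⟩
  obtain ⟨χ, hχN, hχp, hχ1⟩ := (hG.to_subgroup K).exists_monoidHom_ne_one_pow_eq_one ℂ hKK
    (by rwa [Ne, Subgroup.subgroupOf_eq_top])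
  refine ⟨χ, ?_, hχp, hχ1⟩
  simpa [Subgroup.subgroupOf_map_subtype, Subgroup.commutator_le_left] using
    Subgroup.map_mono (f := K.subtype) hχN

section CommutatorPairing

variable {G A : Type*} [Group G] [CommGroup A]

theorem apply_conjNormal_eq {K : Subgroup G} [K.Normal] (χ : K →* A)
    (hχ : ⁅K, ⊤⁆ ≤ χ.ker.map K.subtype) (g : G) (k : K) :
    χ (MulAut.conjNormal g k) = χ k := by
  obtain ⟨c, hc, hck⟩ := hχ (Subgroup.commutator_mem_commutator k.2 (Subgroup.mem_top g))
  have : MulAut.conjNormal g k = c⁻¹ * k := Subtype.ext <| by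
    rw [MulAut.conjNormal_apply, Subgroup.coe_mul, Subgroup.coe_inv,
      show (c : G) = ⁅(k : G), g⁆ from hck, commutatorElement_def]
    group
  rw [this, map_mul, map_inv, hc, inv_one, one_mul]

theorem powSubgroup_le_map_ker {K : Subgroup G} (χ : K →* A) {p : ℕ} (hχ : χ ^ p = 1) :
    powSubgroup K p ≤ χ.ker.map K.subtype := by
  rw [powSubgroup, Subgroup.closure_le]
  rintro _ ⟨k, hk, rfl⟩
  have hkp : ⟨k, hk⟩ ^ p ∈ χ.ker := by
    rw [MonoidHom.mem_ker, map_pow, ← MonoidHom.pow_apply, hχ, MonoidHom.one_apply]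
  exact ⟨_, hkp, rfl⟩

variable {W : Subgroup G}

theorem commutator_mem_commutator_top (g : G) {u : G} (hu : u ∈ W) :
    ⁅g, u⁆ ∈ ⁅W, (⊤ : Subgroup G)⁆ := by
  rw [Subgroup.commutator_comm]
  exact Subgroup.commutator_mem_commutator (Subgroup.mem_top g) hu

def commutatorTop (g : G) (u : W) : ↥⁅W, (⊤ : Subgroup G)⁆ :=
  ⟨⁅g, (u : G)⁆, commutator_mem_commutator_top g u.2⟩

@[simp]
theorem coe_commutatorTop (g : G) (u : W) : (commutatorTop g u : G) = ⁅g, (u : G)⁆ :=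
  rfl

variable [W.Normal]

theorem commutatorTop_mul_left (g h : G) (u : W) :
    commutatorTop (g * h) u = MulAut.conjNormal g (commutatorTop h u) * commutatorTop g u :=
  Subtype.ext <| by
    simp only [coe_commutatorTop, Subgroup.coe_mul, MulAut.conjNormal_apply, commutatorElement_def]
    group

theorem commutatorTop_mul_right (g : G) (u v : W) :
    commutatorTop g (u * v) =
      commutatorTop g u * MulAut.conjNormal (u : G) (commutatorTop g v) :=
  Subtype.ext <| by
    simp only [coe_commutatorTop, Subgroup.coe_mul, MulAut.conjNormal_apply, commutatorElement_def]
    group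

variable (χ : ↥⁅W, (⊤ : Subgroup G)⁆ →* A)
  (hχ : ⁅⁅W, (⊤ : Subgroup G)⁆, ⊤⁆ ≤ χ.ker.map ⁅W, (⊤ : Subgroup G)⁆.subtype)

def commutatorPairing : G →* (W →* A) :=
  MonoidHom.mk'
    (fun g => MonoidHom.mk' (fun u => χ (commutatorTop g u)) fun u v => by
      rw [commutatorTop_mul_right, map_mul, apply_conjNormal_eq χ hχ])
    fun g h => MonoidHom.ext fun u => by
      rw [MonoidHom.mk'_apply, MonoidHom.mul_apply, MonoidHom.mk'_apply, MonoidHom.mk'_apply,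
        commutatorTop_mul_left, map_mul, apply_conjNormal_eq χ hχ, mul_comm]

theorem commutatorPairing_apply (g : G) (u : W) :
    commutatorPairing χ hχ g u = χ (commutatorTop g u) :=
  rfl

theorem ker_commutatorPairing_ne_top (h : χ ≠ 1) : (commutatorPairing χ hχ).ker ≠ ⊤ := by
  refine fun htop => h (MonoidHom.ext fun k => ?_)
  suffices hW : ⁅W, (⊤ : Subgroup G)⁆ ≤ χ.ker.map ⁅W, (⊤ : Subgroup G)⁆.subtype by
    obtain ⟨k', hk', hkk'⟩ := hW k.2
    rw [← Subtype.ext hkk']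
    exact hk'
  rw [Subgroup.commutator_le]
  intro u hu g _
  have hg : χ (commutatorTop g ⟨u, hu⟩) = 1 := by
    rw [← commutatorPairing_apply χ hχ,
      (commutatorPairing χ hχ).mem_ker.1 (htop ▸ Subgroup.mem_top g), MonoidHom.one_apply]
  exact ⟨_, inv_mem hg, by simp [commutatorElement_inv]⟩

theorem commutator_ker_commutatorPairing_le :
    ⁅(commutatorPairing χ hχ).ker, W⁆ ≤ χ.ker.map ⁅W, (⊤ : Subgroup G)⁆.subtype := by
  rw [Subgroup.commutator_le]
  intro c hc u hu
  have hcu : χ (commutatorTop c ⟨u, hu⟩) = 1 := by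
    rw [← commutatorPairing_apply χ hχ, MonoidHom.mem_ker.1 hc, MonoidHom.one_apply]
  exact ⟨_, hcu, rfl⟩

theorem commutatorPairing_apply_eq_one {V : Subgroup G}
    (hV : ⁅V, ⊤⁆ ≤ χ.ker.map ⁅W, (⊤ : Subgroup G)⁆.subtype) (g : G) {u : W}
    (hu : (u : G) ∈ V) :
    commutatorPairing χ hχ g u = 1 := by
  obtain ⟨k, hk, hku⟩ := hV (Subgroup.commutator_mem_commutator hu (Subgroup.mem_top g))
  have : commutatorTop g u = k⁻¹ := Subtype.ext <| by
    rw [Subgroup.coe_inv, show (k : G) = ⁅(u : G), g⁆ from hku, commutatorElement_inv,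
      coe_commutatorTop]
  rw [commutatorPairing_apply, this, map_inv, hk, inv_one]

end CommutatorPairing

theorem Subgroup.index_le_relIndex_of_index_le_relIndex {G : Type*} [Group G]
    {V C W : Subgroup G} [C.FiniteIndex] (hVC : V ≤ C) (hVW : V ≤ W)
    (h : C.index ≤ V.relIndex W) : W.index ≤ V.relIndex C := by
  refine le_of_mul_le_mul_right ?_ (Nat.pos_of_ne_zero C.index_ne_zero_of_finite)
  calc W.index * C.index ≤ W.index * V.relIndex W := Nat.mul_le_mul_left _ h
    _ = V.relIndex C * C.index := by
      rw [mul_comm, relIndex_mul_index hVW, relIndex_mul_index hVC]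

/-- **Theorem 2.** If `G` is an `ω`-maximal finite `p`-group and `ω` is interchangeable
in `G`, then `ω(G) ≤ Z(G)`. -/
theorem verbal_le_center_of_omegaMaximal {G : Type*} [Group G] [Finite G] {p : ℕ}
    (hp : p.Prime) (hG : IsPGroup p G) {n : ℕ} (w : FreeGroup (Fin n))
    (hmax : IsOmegaMaximal (G := G) w) (hint : IsInterchangeable (G := G) w p) :
    verbal w (⊤ : Subgroup G) ≤ Subgroup.center G := by
  have := Fact.mk hp
  set W := verbal w (⊤ : Subgroup G)
  by_contra hW
  obtain ⟨χ, hχ, hχp, hχ1⟩ := hG.exists_character_of_not_le_center hW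
  set C := (commutatorPairing χ hχ).ker
  have hV : ⁅verbal w C, ⊤⁆ ≤ χ.ker.map ⁅W, (⊤ : Subgroup G)⁆.subtype :=
    (hint C inferInstance).trans <| sup_le
      (sup_le (commutator_ker_commutatorPairing_le χ hχ) (powSubgroup_le_map_ker χ hχp)) hχ
  have hCW : C.index ≤ (verbal w C).relIndex W := by
    rw [Subgroup.index_ker]
    refine natCard_le_index_of_forall_apply_eq_one _ (Set.range (commutatorPairing χ hχ)) ?_
    rintro _ ⟨g, rfl⟩ u hu
    exact commutatorPairing_apply_eq_one χ hχ hV g (Subgroup.mem_subgroupOf.1 hu)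
  exact (hmax C (lt_top_iff_ne_top.2 (ker_commutatorPairing_ne_top χ hχ hχ1))).not_ge
    (Subgroup.index_le_relIndex_of_index_le_relIndex (verbal_le w C) (verbal_mono w le_top) hCW)
end

section
/- Let p be an odd prime, i ≥ 2, and G a finite p-group satisfying [G,G]^{p^i} · γ_p(G)^{p^{i−1}} · γ_{p+1}(G) = 1. Then G is i-regular: for all x, y ∈ G, x^{p^i} y^{p^i} = (xy)^{p^i} z for some z ∈ ([⟨x,y⟩, ⟨x,y⟩])^{p^i}. -/
/-!
Call a sequence `ℕ → G` polynomial of weight `r` if it is built from the sequences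
`n ↦ g ^ n.choose k` with `g ∈ γ_{k+r}` by products, inverses and commutators, the weights of
the two entries of a commutator adding up. The forward difference `n ↦ f (n + 1) * (f n)⁻¹`
raises the weight by one, so the `t`-th difference of a weight-`0` sequence takes values in
`γ_t`. Peeling off one binomial factor at a time, every weight-`0` sequence in a group with
`γ_{c+1} = 1` becomes `∏_{j ≤ c} e_j ^ (n choose j)` with `e_j ∈ γ_j`; for
`n ↦ (x^n y^n)⁻¹ (xy)^n` the factors with `j < 2` vanish, which is the Hall–Petrescu formula.
At `n = p^i` the exponent `(p^i choose j)` is divisible by `p^i` for `j < p` and by `p^(i-1)`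
for `j = p`, so under the relations every factor is trivial and `z = 1` works.
-/

open scoped commutatorElement

theorem Nat.dvd_choose_mul (n k : ℕ) : n ∣ n.choose k * k := by
  rcases n with _ | n
  · rcases k with _ | k <;> simp
  rcases k with _ | k
  · simp
  exact Dvd.intro _ (Nat.add_one_mul_choose_eq n k)

theorem Nat.Prime.pow_dvd_choose_pow {p j : ℕ} (hp : p.Prime) (i : ℕ) (hj : 0 < j)
    (hjp : j < p) : p ^ i ∣ (p ^ i).choose j :=
  (Nat.Coprime.pow_left i (hp.coprime_iff_not_dvd.2 (Nat.not_dvd_of_pos_of_lt hj hjp))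
    ).dvd_of_dvd_mul_right (Nat.dvd_choose_mul _ _)

theorem Nat.Prime.pow_pred_dvd_choose_pow_self {p : ℕ} (hp : p.Prime) (i : ℕ) :
    p ^ (i - 1) ∣ (p ^ i).choose p := by
  rcases i with _ | i
  · simp
  refine Nat.dvd_of_mul_dvd_mul_right hp.pos ?_
  simpa [pow_succ] using Nat.dvd_choose_mul (p ^ (i + 1)) p

theorem pow_eq_one_of_powSubgroup_eq_bot {G : Type*} [Group G] {H : Subgroup G} {n : ℕ}
    (hH : powSubgroup H n = ⊥) {g : G} (hg : g ∈ H) : g ^ n = 1 :=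
  Subgroup.mem_bot.mp (hH ▸ Subgroup.subset_closure ⟨g, hg, rfl⟩)

namespace Subgroup

variable {G : Type*} [Group G]

theorem commutator_commutator_le_of_rotate {H₁ H₂ H₃ N : Subgroup G} [N.Normal]
    (h1 : ⁅⁅H₂, H₃⁆, H₁⁆ ≤ N) (h2 : ⁅⁅H₃, H₁⁆, H₂⁆ ≤ N) : ⁅⁅H₁, H₂⁆, H₃⁆ ≤ N := by
  have key : ∀ A B C : Subgroup G, ⁅⁅A, B⁆, C⁆ ≤ N ↔
      ⁅⁅A.map (QuotientGroup.mk' N), B.map (QuotientGroup.mk' N)⁆,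
        C.map (QuotientGroup.mk' N)⁆ = ⊥ := by
    intro A B C
    rw [← map_commutator, ← map_commutator, map_eq_bot_iff, QuotientGroup.ker_mk']
  rw [key] at h1 h2 ⊢
  exact commutator_commutator_eq_bot_of_rotate h1 h2

theorem commutator_lowerCentralSeries_le (m n : ℕ) :
    ⁅(⊤ : Subgroup G).lowerCentralSeries m, (⊤ : Subgroup G).lowerCentralSeries n⁆ ≤
      (⊤ : Subgroup G).lowerCentralSeries (m + n + 1) := by
  induction n generalizing m with
  | zero => exact le_rfl
  | succ n ih =>
    rw [commutator_comm, lowerCentralSeries_succ]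
    apply commutator_commutator_le_of_rotate
    · rw [commutator_comm ⊤, ← lowerCentralSeries_succ]
      simpa only [add_right_comm m 1 n, add_assoc] using ih (m + 1)
    · exact (commutator_mono (ih m) le_rfl).trans
        (by rw [← lowerCentralSeries_succ, show m + n + 1 + 1 = m + (n + 1) + 1 by omega])

end Subgroup

section PolySeq

open Subgroup

variable {G : Type*} [Group G]

variable (G) in
/-- `γ_k` in the usual one-based indexing; truncated subtraction makes `γ_0 = γ_1 = G`. -/
def gamma (k : ℕ) : Subgroup G :=
  (⊤ : Subgroup G).lowerCentralSeries (k - 1)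

theorem gamma_antitone : Antitone (gamma G) :=
  fun _ _ h => Subgroup.lowerCentralSeries_antitone _ (Nat.sub_le_sub_right h 1)

theorem gamma_two : gamma G 2 = commutator G :=
  top_lowerCentralSeries_one

theorem commutator_mem_gamma {a b : ℕ} {x y : G} (hx : x ∈ gamma G a) (hy : y ∈ gamma G b) :
    ⁅x, y⁆ ∈ gamma G (a + b) :=
  Subgroup.lowerCentralSeries_antitone _ (show a + b - 1 ≤ a - 1 + (b - 1) + 1 by omega)
    (commutator_lowerCentralSeries_le _ _ (commutator_mem_commutator hx hy))

def mulFwdDiff (f : ℕ → G) (n : ℕ) : G :=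
  f (n + 1) * (f n)⁻¹

theorem shift_eq_mulFwdDiff_mul (f : ℕ → G) : (fun n => f (n + 1)) = mulFwdDiff f * f := by
  funext n
  simp [mulFwdDiff]

theorem mulFwdDiff_pow_choose_zero (g : G) : mulFwdDiff (fun n => g ^ n.choose 0) = 1 := by
  funext n
  simp [mulFwdDiff]

theorem mulFwdDiff_pow_choose_succ (g : G) (k : ℕ) :
    mulFwdDiff (fun n => g ^ n.choose (k + 1)) = fun n => g ^ n.choose k := by
  funext n
  simp [mulFwdDiff, Nat.choose_succ_succ, pow_add]

theorem mulFwdDiff_mul (f₁ f₂ : ℕ → G) :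
    mulFwdDiff (f₁ * f₂) = (fun n => f₁ (n + 1)) * mulFwdDiff f₂ * (fun n => f₁ (n + 1))⁻¹ *
      mulFwdDiff f₁ := by
  funext n
  simp only [mulFwdDiff, Pi.mul_apply, Pi.inv_apply]
  group

theorem mulFwdDiff_inv (f : ℕ → G) :
    mulFwdDiff f⁻¹ = (fun n => f (n + 1))⁻¹ * (mulFwdDiff f)⁻¹ * (fun n => f (n + 1))⁻¹⁻¹ := by
  funext n
  simp only [mulFwdDiff, Pi.mul_apply, Pi.inv_apply]
  group

theorem mulFwdDiff_commutator (f₁ f₂ : ℕ → G) :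
    mulFwdDiff ⁅f₁, f₂⁆ =
      mulFwdDiff f₁ * ⁅f₁, mulFwdDiff f₂⁆ * (mulFwdDiff f₁)⁻¹ *
        ⁅mulFwdDiff f₁ * mulFwdDiff f₂, ⁅f₁, f₂⁆⁆ *
        (⁅f₁, f₂⁆ * ⁅mulFwdDiff f₁, fun n => f₂ (n + 1)⁆ * ⁅f₁, f₂⁆⁻¹) := by
  funext n
  simp only [mulFwdDiff, commutatorElement_def, Pi.mul_apply, Pi.inv_apply]
  group

theorem mulFwdDiff_eq_one_of_lt {f : ℕ → G} {j : ℕ} (hf : ∀ m < j + 1, f m = 1) :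
    ∀ m < j, mulFwdDiff f m = 1 := fun m hm => by
  simp [mulFwdDiff, hf m (by omega), hf (m + 1) (by omega)]

theorem mulFwdDiff_iterate_zero {f : ℕ → G} {j : ℕ} (hf : ∀ m < j, f m = 1) :
    mulFwdDiff^[j] f 0 = f j := by
  induction j generalizing f with
  | zero => rfl
  | succ j ih =>
    rw [Function.iterate_succ_apply, ih (mulFwdDiff_eq_one_of_lt hf)]
    simp [mulFwdDiff, hf j (by omega)]

theorem eq_one_of_mulFwdDiff_iterate_eq_one {f : ℕ → G} {t : ℕ}
    (hΔ : ∀ n, mulFwdDiff^[t] f n = 1) (hf : ∀ m < t, f m = 1) : ∀ n, f n = 1 := by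
  induction t generalizing f with
  | zero => exact hΔ
  | succ t ih =>
    simp only [Function.iterate_succ_apply] at hΔ
    have hconst : ∀ n, f (n + 1) = f n := fun n =>
      mul_inv_eq_one.mp (ih hΔ (mulFwdDiff_eq_one_of_lt hf) n)
    intro n
    induction n with
    | zero => exact hf 0 (by omega)
    | succ n ihn => rw [hconst, ihn]

inductive IsPolySeq : ℕ → (ℕ → G) → Prop
  | binomial {r : ℕ} (g : G) (k : ℕ) (hg : g ∈ gamma G (k + r)) :
      IsPolySeq r fun n => g ^ n.choose k
  | mul {r : ℕ} {f₁ f₂ : ℕ → G} : IsPolySeq r f₁ → IsPolySeq r f₂ → IsPolySeq r (f₁ * f₂)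
  | inv {r : ℕ} {f : ℕ → G} : IsPolySeq r f → IsPolySeq r f⁻¹
  | commutator {r₁ r₂ : ℕ} {f₁ f₂ : ℕ → G} :
      IsPolySeq r₁ f₁ → IsPolySeq r₂ f₂ → IsPolySeq (r₁ + r₂) ⁅f₁, f₂⁆
  | mono {r r' : ℕ} {f : ℕ → G} : IsPolySeq r f → r' ≤ r → IsPolySeq r' f

namespace IsPolySeq

theorem one (r : ℕ) : IsPolySeq r (1 : ℕ → G) := by
  have h := binomial (r := r) (1 : G) 0 (one_mem _)
  simp only [one_pow] at h
  exact h

theorem apply_mem {r : ℕ} {f : ℕ → G} (hf : IsPolySeq r f) (n : ℕ) : f n ∈ gamma G r := by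
  induction hf with
  | binomial g k hg => exact gamma_antitone (Nat.le_add_left _ k) (pow_mem hg _)
  | mul _ _ ih₁ ih₂ => exact mul_mem ih₁ ih₂
  | inv _ ih => exact inv_mem ih
  | commutator _ _ ih₁ ih₂ => exact commutator_mem_gamma ih₁ ih₂
  | mono _ hr ih => exact gamma_antitone hr ih

theorem conj {r t : ℕ} {f h : ℕ → G} (hf : IsPolySeq r f) (hh : IsPolySeq t h) :
    IsPolySeq r (h * f * h⁻¹) := by
  have hconj : h * f * h⁻¹ = ⁅h, f⁆ * f := by
    rw [commutatorElement_def]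
    group
  rw [hconj]
  exact (hh.commutator hf).mono (Nat.le_add_left r t) |>.mul hf

theorem shift_of_mulFwdDiff {r : ℕ} {f : ℕ → G} (hf : IsPolySeq r f)
    (hΔ : IsPolySeq (r + 1) (mulFwdDiff f)) : IsPolySeq r fun n => f (n + 1) :=
  shift_eq_mulFwdDiff_mul f ▸ (hΔ.mono r.le_succ).mul hf

theorem mulFwdDiff {r : ℕ} {f : ℕ → G} (hf : IsPolySeq r f) :
    IsPolySeq (r + 1) (mulFwdDiff f) := by
  induction hf with
  | @binomial r g k hg =>
    rcases k with _ | k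
    · rw [mulFwdDiff_pow_choose_zero]
      exact one _
    · rw [mulFwdDiff_pow_choose_succ]
      exact binomial g k (by rwa [show k + (r + 1) = k + 1 + r by omega])
  | mul hf₁ _ ih₁ ih₂ =>
    rw [mulFwdDiff_mul]
    exact (ih₂.conj (hf₁.shift_of_mulFwdDiff ih₁)).mul ih₁
  | inv hf ih =>
    rw [mulFwdDiff_inv]
    exact ih.inv.conj (hf.shift_of_mulFwdDiff ih).inv
  | commutator hf₁ hf₂ ih₁ ih₂ =>
    -- Each factor contains a difference, hence has weight `r₁ + r₂ + 1`.
    rw [mulFwdDiff_commutator]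
    have hc := hf₁.commutator hf₂
    refine ((((hf₁.commutator ih₂).conj ih₁).mul ?_).mul ?_).mono (by omega)
    · exact (((ih₁.mono (by omega)).mul (ih₂.mono (by omega))).commutator hc (r₁ := 1)).mono
        (by omega)
    · exact ((ih₁.commutator (hf₂.shift_of_mulFwdDiff ih₂)).conj hc).mono (by omega)
  | mono _ hr ih => exact ih.mono (by omega)

theorem iterate_mulFwdDiff {r : ℕ} {f : ℕ → G} (hf : IsPolySeq r f) (t : ℕ) :
    IsPolySeq (r + t) (_root_.mulFwdDiff^[t] f) := by
  induction t with
  | zero => exact hf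
  | succ t ih =>
    rw [Function.iterate_succ_apply']
    exact ih.mulFwdDiff

end IsPolySeq

theorem IsPolySeq.exists_binomial_expansion {c k : ℕ}
    (hc : (⊤ : Subgroup G).lowerCentralSeries c = ⊥) {f : ℕ → G} (hf : IsPolySeq 0 f)
    (hk : ∀ m < k, f m = 1) :
    ∃ e : ℕ → G, (∀ j, e j ∈ gamma G j) ∧
      ∀ n, f n = ((List.range' k (c + 1 - k)).map fun j => e j ^ n.choose j).prod := by
  induction hm : c + 1 - k generalizing k f with
  | zero =>
    have hΔ : ∀ n, _root_.mulFwdDiff^[c + 1] f n = 1 := fun n => by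
      simpa [gamma, hc] using (hf.iterate_mulFwdDiff (c + 1)).apply_mem n
    refine ⟨1, fun _ => one_mem _, fun n => ?_⟩
    simpa using eq_one_of_mulFwdDiff_iterate_eq_one hΔ (fun m hm' => hk m (by omega)) n
  | succ m ih =>
    set a := f k
    have ha : a ∈ gamma G k := by
      simpa [mulFwdDiff_iterate_zero hk] using (hf.iterate_mulFwdDiff k).apply_mem 0
    set g : ℕ → G := (fun n => a ^ n.choose k)⁻¹ * f with hg_def
    have hg : IsPolySeq 0 g := (binomial a k (by simpa using ha)).inv.mul hf
    have hgk : ∀ m < k + 1, g m = 1 := by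
      intro m hm'
      rcases Nat.lt_succ_iff_lt_or_eq.mp hm' with hm' | rfl
      · simp [g, hk m hm', Nat.choose_eq_zero_of_lt hm']
      · simp [g, a]
    obtain ⟨e, he, hge⟩ := ih hg hgk (by omega)
    refine ⟨Function.update e k a, fun j => ?_, fun n => ?_⟩
    · rcases eq_or_ne j k with rfl | hj
      · simpa using ha
      · simpa [hj] using he j
    · have hrest : ∀ j ∈ List.range' (k + 1) m, Function.update e k a j = e j := fun j hj =>
        Function.update_of_ne (by rw [List.mem_range'_1] at hj; omega) _ _
      rw [List.range'_succ, List.map_cons, List.prod_cons, Function.update_self,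
        List.map_congr_left fun j hj => by rw [hrest j hj], ← hge n, hg_def, Pi.mul_apply,
        Pi.inv_apply, mul_inv_cancel_left]

theorem exists_hallPetrescu_expansion {c : ℕ} (hc : (⊤ : Subgroup G).lowerCentralSeries c = ⊥)
    (x y : G) :
    ∃ e : ℕ → G, (∀ j, e j ∈ gamma G j) ∧ ∀ n,
      (x * y) ^ n =
        x ^ n * y ^ n * ((List.range' 2 (c - 1)).map fun j => e j ^ n.choose j).prod := by
  set f : ℕ → G := fun n => (x ^ n * y ^ n)⁻¹ * (x * y) ^ n with hf_def
  have hf : IsPolySeq 0 f := by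
    have hlinear : f = (fun n => y⁻¹ ^ n.choose 1) * (fun n => x⁻¹ ^ n.choose 1) *
        fun n => (x * y) ^ n.choose 1 := by
      funext n
      simp [f, mul_assoc]
    have htop : ∀ g : G, g ∈ gamma G (1 + 0) := fun g => by simp [gamma]
    rw [hlinear]
    exact ((IsPolySeq.binomial _ 1 (htop _)).mul (.binomial _ 1 (htop _))).mul
      (.binomial _ 1 (htop _))
  have hf01 : ∀ m < 2, f m = 1 := by
    intro m hm
    interval_cases m <;> simp [f]
  obtain ⟨e, he, hexp⟩ := hf.exists_binomial_expansion hc hf01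
  refine ⟨e, he, fun n => ?_⟩
  rw [show c - 1 = c + 1 - 2 by omega, ← hexp n, hf_def, mul_inv_cancel_left]

end PolySeq

theorem iRegular_of_relations_general {G : Type*} [Group G] {p i : ℕ}
    (hp : p.Prime)
    (h : powSubgroup (commutator G) (p ^ i) ⊔
          powSubgroup ((⊤ : Subgroup G).lowerCentralSeries (p - 1)) (p ^ (i - 1)) ⊔
          (⊤ : Subgroup G).lowerCentralSeries p = ⊥) :
    ∀ x y : G,
      ∃ z ∈ powSubgroup ⁅Subgroup.closure {x, y}, Subgroup.closure {x, y}⁆ (p ^ i),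
        x ^ p ^ i * y ^ p ^ i = (x * y) ^ p ^ i * z := by
  obtain ⟨⟨hcomm, hγp⟩, hclass⟩ := by simpa only [sup_eq_bot_iff] using h
  intro x y
  obtain ⟨e, he, hexp⟩ := exists_hallPetrescu_expansion hclass x y
  refine ⟨1, one_mem _, ?_⟩
  rw [mul_one, hexp, List.prod_eq_one, mul_one]
  simp only [List.mem_map, List.mem_range'_1]
  rintro _ ⟨j, ⟨hj2, hjp⟩, rfl⟩
  rcases Nat.lt_or_ge j p with hjp | hjp
  · obtain ⟨t, ht⟩ := hp.pow_dvd_choose_pow i (by omega) hjp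
    have hej : e j ∈ commutator G := gamma_two (G := G) ▸ gamma_antitone hj2 (he j)
    rw [ht, pow_mul, pow_eq_one_of_powSubgroup_eq_bot hcomm hej, one_pow]
  · obtain rfl : j = p := by omega
    obtain ⟨t, ht⟩ := hp.pow_pred_dvd_choose_pow_self i
    rw [ht, pow_mul, pow_eq_one_of_powSubgroup_eq_bot hγp (he j), one_pow]

/-- Let `p` be odd, `i ≥ 2`, and `G` a finite `p`-group with
`[G,G]^{p^i} γ_p(G)^{p^{i-1}} γ_{p+1}(G) = 1`. Then `G` is `i`-regular: for all `x, y`,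
`x^{p^i} y^{p^i} = (xy)^{p^i} z` with `z ∈ ([⟨x,y⟩,⟨x,y⟩])^{p^i}`. -/
theorem iRegular_of_relations {G : Type*} [Group G] [Finite G] {p i : ℕ}
    (hp : p.Prime) (hodd : Odd p) (hi : 2 ≤ i) (hG : IsPGroup p G)
    (h : powSubgroup (commutator G) (p ^ i) ⊔
          powSubgroup ((⊤ : Subgroup G).lowerCentralSeries (p - 1)) (p ^ (i - 1)) ⊔
          (⊤ : Subgroup G).lowerCentralSeries p = ⊥) :
    ∀ x y : G,
      ∃ z ∈ powSubgroup ⁅Subgroup.closure {x, y}, Subgroup.closure {x, y}⁆ (p ^ i),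
        x ^ p ^ i * y ^ p ^ i = (x * y) ^ p ^ i * z :=
  iRegular_of_relations_general hp h
end

section
/- Let G be a finite p-group, N ⊴ G a normal subgroup, and p an odd prime. Then [γ_p(N), G] ≤ [γ_p(G), N]. -/
/-- The lower central series of a subgroup `H ≤ G`, as subgroups of `G`:
`gammaSub H m = γ_{m+1}(H)`. -/
def gammaSub {G : Type*} [Group G] (H : Subgroup G) : ℕ → Subgroup G
  | 0 => H
  | m + 1 => ⁅gammaSub H m, H⁆

/-!
Induction on `k` proves the sharper `[γ_{k+1}(N), γ_{i+1}(G)] ≤ [γ_{k+i+1}(G), N]` for all `i`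
simultaneously; the theorem is the case `i = 0`. In the inductive step `[[γ_{k+1}(N), N], γ_{i+1}(G)]`
is bounded by the three subgroups lemma modulo the normal subgroup `[γ_{k+i+2}(G), N]`: one rotated
term falls to the induction hypothesis at `i + 1`, since `[N, γ_{i+1}(G)] ≤ γ_{i+2}(G)`, the other to
the induction hypothesis at `i`, since `[γ_{k+i+1}(G), N] ≤ γ_{k+i+2}(G)`.
-/

theorem gammaSub_eq_lowerCentralSeries {G : Type*} [Group G] (H : Subgroup G) :
    gammaSub H = H.lowerCentralSeries := by
  funext m
  induction m with
  | zero => rfl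
  | succ m ih => rw [gammaSub, ih, Subgroup.lowerCentralSeries_succ]

namespace Subgroup

variable {G : Type*} [Group G]

theorem commutator_commutator_le_of_rotate_s15 {A B C K : Subgroup G} [K.Normal]
    (h₁ : ⁅⁅B, C⁆, A⁆ ≤ K) (h₂ : ⁅⁅C, A⁆, B⁆ ≤ K) : ⁅⁅A, B⁆, C⁆ ≤ K := by
  let f := QuotientGroup.mk' K
  have le_iff_map_eq_bot : ∀ X Y Z : Subgroup G,
      ⁅⁅X, Y⁆, Z⁆ ≤ K ↔ ⁅⁅X.map f, Y.map f⁆, Z.map f⁆ = ⊥ := fun X Y Z => by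
    rw [← map_commutator, ← map_commutator, map_eq_bot_iff, QuotientGroup.ker_mk']
  rw [le_iff_map_eq_bot] at h₁ h₂ ⊢
  exact commutator_commutator_eq_bot_of_rotate h₁ h₂

theorem commutator_le_top_lowerCentralSeries_succ (H : Subgroup G) (n : ℕ) :
    ⁅H, (⊤ : Subgroup G).lowerCentralSeries n⁆ ≤ (⊤ : Subgroup G).lowerCentralSeries (n + 1) :=
  (commutator_comm _ _).le.trans (commutator_mono le_rfl le_top)

theorem commutator_lowerCentralSeries_le_s15 (N : Subgroup G) [N.Normal] (k i : ℕ) :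
    ⁅N.lowerCentralSeries k, (⊤ : Subgroup G).lowerCentralSeries i⁆ ≤
      ⁅(⊤ : Subgroup G).lowerCentralSeries (k + i), N⁆ := by
  set Γ := (⊤ : Subgroup G).lowerCentralSeries
  induction k generalizing i with
  | zero => rw [zero_add]; exact (commutator_comm _ _).le
  | succ k ih =>
    have h₁ : ⁅⁅N, Γ i⁆, N.lowerCentralSeries k⁆ ≤ ⁅Γ (k + 1 + i), N⁆ :=
      calc ⁅⁅N, Γ i⁆, N.lowerCentralSeries k⁆
          = ⁅N.lowerCentralSeries k, ⁅N, Γ i⁆⁆ := commutator_comm _ _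
        _ ≤ ⁅N.lowerCentralSeries k, Γ (i + 1)⁆ :=
          commutator_mono le_rfl (commutator_le_top_lowerCentralSeries_succ N i)
        _ ≤ ⁅Γ (k + 1 + i), N⁆ := by
          simpa only [Nat.add_right_comm, Nat.add_assoc] using ih (i + 1)
    have h₂ : ⁅⁅Γ i, N.lowerCentralSeries k⁆, N⁆ ≤ ⁅Γ (k + 1 + i), N⁆ := by
      refine commutator_mono ?_ le_rfl
      calc ⁅Γ i, N.lowerCentralSeries k⁆
          = ⁅N.lowerCentralSeries k, Γ i⁆ := commutator_comm _ _
        _ ≤ ⁅Γ (k + i), N⁆ := ih i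
        _ ≤ ⁅Γ (k + i), ⊤⁆ := commutator_mono le_rfl le_top
        _ = Γ (k + 1 + i) := by rw [Nat.add_right_comm]; rfl
    exact commutator_commutator_le_of_rotate_s15 h₁ h₂

end Subgroup

theorem commutator_gammaP_le_general {G : Type*} [Group G] {p : ℕ}
    (N : Subgroup G) (hN : N.Normal) :
    ⁅gammaSub N (p - 1), (⊤ : Subgroup G)⁆ ≤ ⁅gammaSub (⊤ : Subgroup G) (p - 1), N⁆ := by
  rw [gammaSub_eq_lowerCentralSeries, gammaSub_eq_lowerCentralSeries]
  exact N.commutator_lowerCentralSeries_le_s15 (p - 1) 0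

/-- For an odd prime `p`, a finite `p`-group `G` and a normal subgroup `N ⊴ G`,
`[γ_p(N), G] ≤ [γ_p(G), N]`. -/
theorem commutator_gammaP_le {G : Type*} [Group G] [Finite G] {p : ℕ}
    (hp : p.Prime) (hodd : Odd p) (hG : IsPGroup p G)
    (N : Subgroup G) (hN : N.Normal) :
    ⁅gammaSub N (p - 1), (⊤ : Subgroup G)⁆ ≤ ⁅gammaSub (⊤ : Subgroup G) (p - 1), N⁆ :=
  commutator_gammaP_le_general N hN
end
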